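/- Let d ≥ 1, let Q(t) = a_1 t^{α_1} + … + a_d t^{α_d} with real coefficients and distinct integer exponents 2 ≤ α_1 < … < α_d = n, and let λ = 2^{1/n} and Γ₀ = 2^{10·d!}. Suppose that for some index j₂ and some l ∈ ℤ we have |α_{j₂}(α_{j₂}−1) a_{j₂}| λ^{α_{j₂} l} ≥ 2^{Γ₀} |α_{j'}(α_{j'}−1) a_{j'}| λ^{α_{j'} l} for every j' ≠ j₂. Then for every t with λ^{l−2} ≤ |t| ≤ λ^{l+1}, the second derivative satisfies |Q''(t)| ≥ |a_{j₂}| |t|^{α_{j₂}−2}. -/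

import Mathlib

/-!
On the annulus `λ^(l-2) ≤ |t| ≤ λ^(l+1)` the power `|t|^(α-2)` lies within a factor `λ^(O(α))`
of `λ^((α-2) l)`. Comparing a non-dominant term of `Q''(t)` with the dominant one, these
distortions add up to at most `λ^(α_j' + 2 α_j₂ - 6) ≤ λ^(3n) = 8`. Hence each of the `d - 1`
non-dominant terms is at most `8 · 2^(-Γ₀)` times the dominant term, so together they are at most
half of it, and the dominant term is at least `2 |a_j₂| |t|^(α_j₂-2)` because `α(α-1) ≥ 2`.
-/

open Real Finset Nat

theorem iteratedDeriv_two_sum_mul_pow {𝕜 ι : Type*} [NontriviallyNormedField 𝕜] (s : Finset ι)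
    (a : ι → 𝕜) (k : ι → ℕ) (t : 𝕜) :
    iteratedDeriv 2 (fun x => ∑ j ∈ s, a j * x ^ k j) t
      = ∑ j ∈ s, (k j : 𝕜) * ((k j : 𝕜) - 1) * a j * t ^ (k j - 2) := by
  rw [iteratedDeriv_fun_sum fun j _ => by fun_prop]
  refine sum_congr rfl fun j _ => ?_
  rw [iteratedDeriv_const_mul_field, iteratedDeriv_pow, Nat.cast_descFactorial_two]
  ring

theorem norm_le_norm_sum_add_of_norm_le {ι E : Type*} [Fintype ι] [SeminormedAddCommGroup E]
    (x : ι → E) (i : ι) {ε : ℝ} (h : ∀ j ≠ i, ‖x j‖ ≤ ε) :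
    ‖x i‖ ≤ ‖∑ j, x j‖ + (Fintype.card ι - 1 : ℕ) * ε := by
  classical
  have hrest : ‖∑ j ∈ univ.erase i, x j‖ ≤ (Fintype.card ι - 1 : ℕ) * ε :=
    calc _ ≤ ∑ j ∈ univ.erase i, ‖x j‖ := norm_sum_le _ _
      _ ≤ #(univ.erase i) • ε := sum_le_card_nsmul _ _ _ fun j hj => h j (ne_of_mem_erase hj)
      _ = _ := by rw [card_erase_of_mem (mem_univ i), Finset.card_univ, nsmul_eq_mul]
  calc ‖x i‖ = ‖∑ j, x j - ∑ j ∈ univ.erase i, x j‖ := by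
        rw [← add_sum_erase univ x (mem_univ i), add_sub_cancel_right]
    _ ≤ ‖∑ j, x j‖ + ‖∑ j ∈ univ.erase i, x j‖ := norm_sub_le _ _
    _ ≤ _ := by gcongr

theorem mul_abs_pow_le_of_dominant_at_scale {lam K c c' t : ℝ} {m k : ℕ} {l : ℤ}
    (hlam : 0 < lam) (hm : 2 ≤ m) (hk : 2 ≤ k) (hK : 0 ≤ K) (hc : 0 ≤ c) (hc' : 0 ≤ c')
    (hdom : K * (c' * lam ^ ((m : ℤ) * l)) ≤ c * lam ^ ((k : ℤ) * l))
    (ht1 : lam ^ (l - 2) ≤ |t|) (ht2 : |t| ≤ lam ^ (l + 1)) :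
    K * (c' * |t| ^ (m - 2)) ≤ lam ^ ((m : ℤ) + 2 * k - 6) * (c * |t| ^ (k - 2)) := by
  have hup : |t| ^ (m - 2) ≤ lam ^ ((l + 1) * ((m : ℤ) - 2)) :=
    calc |t| ^ (m - 2) ≤ (lam ^ (l + 1)) ^ (m - 2) := by gcongr
      _ = _ := by rw [← zpow_natCast, ← zpow_mul, Nat.cast_sub hm, Nat.cast_ofNat]
  have hlow : lam ^ ((l - 2) * ((k : ℤ) - 2)) ≤ |t| ^ (k - 2) :=
    calc _ = (lam ^ (l - 2)) ^ (k - 2) := by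
          rw [← zpow_natCast, ← zpow_mul, Nat.cast_sub hk, Nat.cast_ofNat]
      _ ≤ _ := by gcongr
  calc K * (c' * |t| ^ (m - 2))
      ≤ K * (c' * lam ^ ((m : ℤ) * l)) * lam ^ ((m : ℤ) - 2 - 2 * l) := by
        rw [mul_assoc K, mul_assoc c', ← zpow_add₀ hlam.ne']
        ring_nf at hup ⊢
        gcongr
    _ ≤ c * lam ^ ((k : ℤ) * l) * lam ^ ((m : ℤ) - 2 - 2 * l) := by gcongr
    _ = lam ^ ((m : ℤ) + 2 * k - 6) * (c * lam ^ ((l - 2) * ((k : ℤ) - 2))) := by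
        rw [mul_assoc, ← zpow_add₀ hlam.ne', mul_left_comm, ← zpow_add₀ hlam.ne']
        ring_nf
    _ ≤ _ := by gcongr

theorem rpow_inv_natCast_zpow_le_pow {x : ℝ} (hx : 1 ≤ x) {n m : ℕ} (hn : n ≠ 0) {e : ℤ}
    (he : e ≤ n * m) : (x ^ (n⁻¹ : ℝ)) ^ e ≤ x ^ m :=
  calc (x ^ (n⁻¹ : ℝ)) ^ e ≤ (x ^ (n⁻¹ : ℝ)) ^ ((n * m : ℕ) : ℤ) :=
        zpow_le_zpow_right₀ (one_le_rpow hx (by positivity)) (by exact_mod_cast he)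
    _ = x ^ m := by rw [zpow_natCast, pow_mul, rpow_inv_natCast_pow (by linarith) hn]

theorem natCast_sub_one_mul_eight_div_le_half (d : ℕ) :
    ((d - 1 : ℕ) : ℝ) * (8 / 2 ^ 2 ^ (10 * d !)) ≤ 1 / 2 := by
  have h16 : 16 * (d - 1) ≤ 2 ^ 2 ^ (10 * d !) :=
    calc 16 * (d - 1) ≤ 2 ^ (d + 4) := by rw [pow_add]; have := d.lt_two_pow_self; omega
      _ ≤ 2 ^ 2 ^ (10 * d !) := by
        have := d.self_le_factorial
        have := (10 * d !).lt_two_pow_self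
        have := d.factorial_pos
        gcongr <;> omega
  have h16' : 16 * ((d - 1 : ℕ) : ℝ) ≤ 2 ^ 2 ^ (10 * d !) := by exact_mod_cast h16
  rw [mul_div_assoc', div_le_iff₀ (by positivity)]
  linarith

theorem two_mul_abs_le_abs_natCast_mul_sub_one_mul {k : ℕ} (hk : 2 ≤ k) (a : ℝ) :
    2 * |a| ≤ |(k : ℝ) * ((k : ℝ) - 1) * a| := by
  have hk' : (2 : ℝ) ≤ k := by exact_mod_cast hk
  have hfac : 2 ≤ (k : ℝ) * ((k : ℝ) - 1) := by nlinarith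
  rw [abs_mul _ a, abs_of_nonneg (by linarith : 0 ≤ (k : ℝ) * ((k : ℝ) - 1))]
  gcongr

/-- **The dominating monomial of `Q''` controls the size of `Q''` from below.**
Let `d ≥ 1`, `Q(t) = ∑ j, a j * t ^ (α j)` with real coefficients and distinct integer
exponents `2 ≤ α 1 < … < α d = n`, `λ = 2^{1/n}`, `Γ₀ = 2^{10·d!}`.  If for some index
`j₂` and some `l ∈ ℤ` we have
`|α j₂ (α j₂ − 1) a j₂| λ^{α j₂ l} ≥ 2^{Γ₀} |α j' (α j' − 1) a j'| λ^{α j' l}` for every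
`j' ≠ j₂`, then for every `t` with `λ^{l−2} ≤ |t| ≤ λ^{l+1}` the second derivative
satisfies `|Q''(t)| ≥ |a j₂| |t|^{α j₂ − 2}`. -/
theorem dominating_monomial_second_derivative_lower_bound
    (d : ℕ) (hd : 1 ≤ d) (n : ℕ)
    (a : Fin d → ℝ) (α : Fin d → ℕ)
    (hmono : StrictMono α) (h2 : ∀ j, 2 ≤ α j)
    (hlast : α ⟨d - 1, by omega⟩ = n)
    (lam : ℝ) (hlam : lam = (2 : ℝ) ^ ((n : ℝ)⁻¹))
    (Γ₀ : ℕ) (hΓ₀ : Γ₀ = 2 ^ (10 * Nat.factorial d))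
    (j₂ : Fin d) (l : ℤ)
    (hdom : ∀ j' : Fin d, j' ≠ j₂ →
      (2 : ℝ) ^ Γ₀ * (|(α j' : ℝ) * ((α j' : ℝ) - 1) * a j'| * lam ^ ((α j' : ℤ) * l))
        ≤ |(α j₂ : ℝ) * ((α j₂ : ℝ) - 1) * a j₂| * lam ^ ((α j₂ : ℤ) * l)) :
    ∀ t : ℝ, lam ^ (l - 2) ≤ |t| → |t| ≤ lam ^ (l + 1) →
      |a j₂| * |t| ^ (α j₂ - 2)
        ≤ |iteratedDeriv 2 (fun s : ℝ => ∑ j, a j * s ^ α j) t| := by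
  intro t ht1 ht2
  have hn : n ≠ 0 := by have := h2 ⟨d - 1, by omega⟩; omega
  have hα_le : ∀ j, α j ≤ n := fun j => hlast ▸ hmono.monotone (Fin.le_def.mpr (by simp; omega))
  set X := |(α j₂ : ℝ) * ((α j₂ : ℝ) - 1) * a j₂| * |t| ^ (α j₂ - 2)
  have hsmall : ∀ j ≠ j₂,
      ‖(α j : ℝ) * ((α j : ℝ) - 1) * a j * t ^ (α j - 2)‖ ≤ 8 / 2 ^ Γ₀ * X := by
    intro j hj
    have hscale := mul_abs_pow_le_of_dominant_at_scale (hlam ▸ by positivity) (h2 j) (h2 j₂)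
      (by positivity) (abs_nonneg _) (abs_nonneg _) (hdom j hj) ht1 ht2
    have h8 : lam ^ ((α j : ℤ) + 2 * α j₂ - 6) ≤ 2 ^ 3 := hlam ▸
      rpow_inv_natCast_zpow_le_pow one_le_two hn (by have := hα_le j; have := hα_le j₂; omega)
    rw [div_mul_eq_mul_div, le_div_iff₀ (by positivity)]
    calc _ = 2 ^ Γ₀ * (|(α j : ℝ) * ((α j : ℝ) - 1) * a j| * |t| ^ (α j - 2)) := by
          rw [Real.norm_eq_abs, abs_mul, abs_pow]; ring
      _ ≤ _ := hscale
      _ ≤ 8 * X := by norm_num at h8; gcongr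
  have hsplit := norm_le_norm_sum_add_of_norm_le _ j₂ hsmall
  rw [Real.norm_eq_abs, abs_mul, abs_pow, Real.norm_eq_abs, Fintype.card_fin] at hsplit
  have hcount : ((d - 1 : ℕ) : ℝ) * (8 / 2 ^ Γ₀ * X) ≤ X / 2 := by
    rw [← mul_assoc, hΓ₀, div_eq_mul_inv X, mul_comm X]
    gcongr
    exact (natCast_sub_one_mul_eight_div_le_half d).trans_eq (one_div 2)
  have hcoef := mul_le_mul_of_nonneg_right (two_mul_abs_le_abs_natCast_mul_sub_one_mul (h2 j₂)
    (a j₂)) (by positivity : 0 ≤ |t| ^ (α j₂ - 2))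
  rw [iteratedDeriv_two_sum_mul_pow]
  linarith
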